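/- Let (R_n) be a monic OPS with respect to a regular functional w, let R_n^{[k]}(z) := (γ_n!/γ_{n+k}!) D_x^k R_{n+k}(z) be the normalized k-th divided-difference, a monic polynomial of degree n, and let (r_n^{[k]}) be the dual basis of (R_n^{[k]}). Then D_x^k r_n^{[k]} = (−1)^k (γ_{n+k}!/γ_n!) r_{n+k} for all n, k ≥ 0, where (r_n) is the dual basis of (R_n). -/
import Mathlib

open Polynomial


/-- The operator `D_x` on functionals: `⟨D_x u, f⟩ = −⟨u, D_x f⟩`. -/
noncomputable def funD (Dx : Polynomial ℂ →ₗ[ℂ] Polynomial ℂ)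
    (u : Polynomial ℂ →ₗ[ℂ] ℂ) : Polynomial ℂ →ₗ[ℂ] ℂ :=
  -(u.comp Dx)

/-- Let `(R_n)` be a monic OPS with respect to a regular functional `w`, let
`R_n^{[k]} := (γ_n!/γ_{n+k}!) D_x^k R_{n+k}` (a monic polynomial of degree `n`), and let
`(r_n^{[k]})` be its dual basis. Then `D_x^k r_n^{[k]} = (−1)^k (γ_{n+k}!/γ_n!) r_{n+k}`,
where `(r_n)` is the dual basis of `(R_n)`. -/
theorem funD_iterate_dual_basis (q : ℝ) (hq : 0 < q) (hq1 : q ≠ 1)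
    (γ : ℕ → ℂ)
    (hγ : ∀ n : ℕ, γ n = (((q ^ ((n : ℝ) / 2) - q ^ (-((n : ℝ) / 2))) /
        (q ^ ((1 : ℝ) / 2) - q ^ (-((1 : ℝ) / 2))) : ℝ) : ℂ))
    (γfact : ℕ → ℂ) (hγfact0 : γfact 0 = 1)
    (hγfact : ∀ n : ℕ, γfact (n + 1) = γ (n + 1) * γfact n)
    (Dx : Polynomial ℂ →ₗ[ℂ] Polynomial ℂ)
    (hDxX : ∀ n : ℕ, ∃ p : Polynomial ℂ, p.degree < (n : ℕ) ∧
      Dx (Polynomial.X ^ (n + 1)) = γ (n + 1) • Polynomial.X ^ n + p)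
    (hDxC : Dx 1 = 0)
    (w : Polynomial ℂ →ₗ[ℂ] ℂ)
    (R : ℕ → Polynomial ℂ) (hmonic : ∀ n, (R n).Monic) (hdeg : ∀ n, (R n).natDegree = n)
    (h : ℕ → ℂ) (hh : ∀ n, h n ≠ 0)
    (horth : ∀ n m, w (R n * R m) = if n = m then h n else 0)
    (r : ℕ → Polynomial ℂ →ₗ[ℂ] ℂ)
    (hr : ∀ n m, r n (R m) = if n = m then 1 else 0)
    (k : ℕ)
    (Rk : ℕ → Polynomial ℂ)
    (hRk : ∀ n, Rk n = (γfact n / γfact (n + k)) • (Dx ^ k) (R (n + k)))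
    (rk : ℕ → Polynomial ℂ →ₗ[ℂ] ℂ)
    (hrk : ∀ n m, rk n (Rk m) = if n = m then 1 else 0) :
    ∀ n : ℕ, (funD Dx)^[k] (rk n) = ((-1) ^ k * (γfact (n + k) / γfact n)) • r (n + k) := by
  -- `q^a ≠ q^(-a)` for `a > 0`
  have key : ∀ a : ℝ, 0 < a → q ^ (-a) ≠ q ^ a := by
    intro a ha
    rcases lt_or_gt_of_ne hq1 with hlt | hgt
    · exact ne_of_gt ((Real.rpow_lt_rpow_left_iff_of_base_lt_one hq hlt).2 (by linarith))
    · exact ne_of_lt ((Real.rpow_lt_rpow_left_iff hgt).2 (by linarith))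
  have hγne : ∀ n : ℕ, γ (n + 1) ≠ 0 := by
    intro n
    rw [hγ]
    rw [Complex.ofReal_ne_zero]
    apply div_ne_zero
    · exact sub_ne_zero.2 (Ne.symm (key _ (by positivity)))
    · exact sub_ne_zero.2 (Ne.symm (key _ (by norm_num)))
  have hγfactne : ∀ n, γfact n ≠ 0 := by
    intro n
    induction n with
    | zero => rw [hγfact0]; exact one_ne_zero
    | succ m ih => rw [hγfact]; exact mul_ne_zero (hγne m) ih
  -- degree of Dx on monomials
  have hDxmon : ∀ m : ℕ, (Dx (X ^ m : Polynomial ℂ)).degree < (m : WithBot ℕ) := by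
    intro m
    cases m with
    | zero => simpa [hDxC] using (WithBot.bot_lt_coe 0)
    | succ m =>
      obtain ⟨p, hp, he⟩ := hDxX m
      rw [he]
      apply lt_of_le_of_lt (degree_add_le _ _)
      apply max_lt
      · exact lt_of_le_of_lt (le_trans (degree_smul_le _ _) (degree_X_pow_le m))
          (by exact_mod_cast Nat.lt_succ_self m)
      · exact lt_trans hp (by exact_mod_cast Nat.lt_succ_self m)
  -- Dx lowers degree
  have hDxdeg : ∀ (n : ℕ) (p : Polynomial ℂ), p.degree ≤ (n : WithBot ℕ) →
      (Dx p).degree < (n : WithBot ℕ) := by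
    intro n p hp
    have hnd : p.natDegree < n + 1 := by
      rcases eq_or_ne p 0 with rfl | h0
      · simp
      · rw [degree_eq_natDegree h0] at hp
        exact Nat.lt_succ_of_le (by exact_mod_cast hp)
    rw [p.as_sum_range' (n + 1) hnd, map_sum]
    apply lt_of_le_of_lt (degree_sum_le _ _)
    refine (Finset.sup_lt_iff (WithBot.bot_lt_coe n)).2 ?_
    intro i hi
    rw [Finset.mem_range] at hi
    rw [← C_mul_X_pow_eq_monomial, ← smul_eq_C_mul, map_smul]
    apply lt_of_le_of_lt (degree_smul_le _ _)
    refine lt_of_lt_of_le (hDxmon i) ?_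
    have hin : i ≤ n := Nat.lt_succ_iff.1 hi
    simp only [Nat.cast_withBot]
    exact WithBot.coe_le_coe.2 hin
  -- Dx^k kills polynomials of degree < k
  have hDxpow0 : ∀ (j : ℕ) (p : Polynomial ℂ), p.degree < (j : WithBot ℕ) → (Dx ^ j) p = 0 := by
    intro j
    induction j with
    | zero =>
      intro p hp
      have : p = 0 := by
        by_contra h0
        rw [degree_eq_natDegree h0] at hp
        exact absurd hp (by exact_mod_cast Nat.not_lt_zero _)
      simp [this]
    | succ j ih =>
      intro p hp
      have hle : p.degree ≤ (j : WithBot ℕ) := by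
        rcases eq_or_ne p 0 with rfl | h0
        · simp
        · rw [degree_eq_natDegree h0] at hp ⊢
          exact_mod_cast Nat.lt_succ_iff.1 (by exact_mod_cast hp)
      rw [pow_succ, Module.End.mul_apply]
      exact ih (Dx p) (hDxdeg j p hle)
  -- iterate formula
  have hiter : ∀ (j : ℕ) (u : Polynomial ℂ →ₗ[ℂ] ℂ) (f : Polynomial ℂ),
      ((funD Dx)^[j] u) f = (-1 : ℂ) ^ j * u ((Dx ^ j) f) := by
    intro j
    induction j with
    | zero => intro u f; simp
    | succ j ih =>
      intro u f
      rw [Function.iterate_succ_apply]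
      rw [ih]
      simp only [funD, LinearMap.neg_apply, LinearMap.comp_apply]
      have hp : (Dx ^ (j + 1)) f = Dx ((Dx ^ j) f) := by
        rw [pow_succ', Module.End.mul_apply]
      rw [hp]
      ring
  -- extensionality via the basis (R m)
  have hext : ∀ (u v : Polynomial ℂ →ₗ[ℂ] ℂ), (∀ m, u (R m) = v (R m)) → u = v := by
    intro u v huv
    have main : ∀ N : ℕ, ∀ p : Polynomial ℂ, p.degree < (N : WithBot ℕ) → u p = v p := by
      intro N
      induction N with
      | zero =>
        intro p hp
        have : p = 0 := by
          by_contra h0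
          rw [degree_eq_natDegree h0] at hp
          exact absurd hp (by exact_mod_cast Nat.not_lt_zero _)
        simp [this]
      | succ N ih =>
        intro p hp
        rcases eq_or_ne p 0 with rfl | h0
        · simp
        · set d := p.natDegree with hd
          have hdN : d ≤ N := by
            rw [degree_eq_natDegree h0] at hp
            exact Nat.lt_succ_iff.1 (by exact_mod_cast hp)
          set c := p.leadingCoeff with hc
          have hc0 : c ≠ 0 := leadingCoeff_ne_zero.2 h0
          have hRd : (C c * R d).degree = p.degree := by
            rw [degree_C_mul hc0, degree_eq_natDegree h0,
              degree_eq_natDegree (hmonic d).ne_zero, hdeg]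
          have hlc : p.leadingCoeff = (C c * R d).leadingCoeff := by
            rw [leadingCoeff_mul, leadingCoeff_C, (hmonic d).leadingCoeff, mul_one]
          have hsub : (p - C c * R d).degree < p.degree :=
            degree_sub_lt hRd.symm h0 hlc
          have hsubN : (p - C c * R d).degree < (N : WithBot ℕ) := by
            apply lt_of_lt_of_le hsub
            rw [degree_eq_natDegree h0]
            exact_mod_cast hdN
          have h1 : u (p - C c * R d) = v (p - C c * R d) := ih _ hsubN
          have h2 : u (C c * R d) = v (C c * R d) := by
            rw [← smul_eq_C_mul, map_smul, map_smul, huv d]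
          have := congrArg₂ (· + ·) h1 h2
          simpa [sub_add_cancel] using this
    apply LinearMap.ext
    intro p
    apply main (p.natDegree + 1)
    rcases eq_or_ne p 0 with rfl | h0
    · rw [degree_zero]
      simp only [Nat.cast_withBot]
      exact WithBot.bot_lt_coe _
    · rw [degree_eq_natDegree h0]
      exact_mod_cast Nat.lt_succ_self _
  intro n
  apply hext
  intro m
  rw [hiter]
  simp only [LinearMap.smul_apply, smul_eq_mul]
  rcases lt_or_ge m k with hm | hm
  · have h0 : (Dx ^ k) (R m) = 0 := by
      apply hDxpow0
      rw [degree_eq_natDegree (hmonic m).ne_zero, hdeg]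
      exact_mod_cast hm
    rw [h0, map_zero, mul_zero, hr]
    have hne : n + k ≠ m := by omega
    simp [hne]
  · obtain ⟨m', rfl⟩ : ∃ m', m = m' + k := ⟨m - k, by omega⟩
    have hRkeq : (Dx ^ k) (R (m' + k)) = (γfact (m' + k) / γfact m') • Rk m' := by
      rw [hRk, smul_smul]
      have : γfact (m' + k) / γfact m' * (γfact m' / γfact (m' + k)) = 1 := by
        rw [div_mul_div_comm, mul_comm]
        exact div_self (mul_ne_zero (hγfactne _) (hγfactne _))
      rw [this, one_smul]
    rw [hRkeq, map_smul, smul_eq_mul, hrk, hr]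
    by_cases hnm : n = m'
    · subst hnm
      simp
    · have hne : n + k ≠ m' + k := by omega
      simp [hnm, hne]
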